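/- arXiv:2305.18594 — 4 statements merged into one kernel-verified Lean document; each statement's English description precedes it below -/
import Mathlib

section
/- Let e, δ : Fin p → ℝ satisfy e i * δ i ≥ 0 and |e i| ≤ f_M * |δ i| for all i, where f_M > 0. Let L be a diagonal positive definite p × p matrix with minimal eigenvalue L_m > 0. Then δᵀ L e ≥ (L_m / f_M) * ‖e‖². -/
open Matrix in
theorem stmt4 (p : ℕ) (e δ : Fin p → ℝ) (f_M L_m : ℝ) (hf : 0 < f_M)
    (l : Fin p → ℝ) (hLm : 0 < L_m) (hl : ∀ i, L_m ≤ l i)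
    (hsign : ∀ i, e i * δ i ≥ 0) (hmag : ∀ i, |e i| ≤ f_M * |δ i|) :
    δ ⬝ᵥ (Matrix.diagonal l).mulVec e ≥ (L_m / f_M) * ∑ i, e i ^ 2 := by
  simp only [dotProduct, mulVec_diagonal, Finset.mul_sum, ge_iff_le]
  apply Finset.sum_le_sum
  intro i _
  have hkey : e i ^ 2 ≤ f_M * (e i * δ i) := by
    have h1 : |e i| * |e i| ≤ (f_M * |δ i|) * |e i| := by
      apply mul_le_mul_of_nonneg_right (hmag i) (abs_nonneg _)
    have h2 : |e i| * |e i| = e i ^ 2 := by rw [← abs_mul, sq, abs_mul_self]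
    have h3 : |δ i| * |e i| = e i * δ i := by
      rw [← abs_mul, abs_of_nonneg]
      · ring
      · nlinarith [hsign i]
    nlinarith [h1, h2, h3]
  have hde : 0 ≤ e i * δ i := hsign i
  have : L_m / f_M * e i ^ 2 ≤ L_m * (e i * δ i) := by
    rw [div_mul_eq_mul_div, div_le_iff₀ hf]
    nlinarith
  nlinarith [mul_le_mul_of_nonneg_left (hl i) hde]
end

section
/- Let Ŵ(k+1) = Ŵ(k) + α * L * e * ŝᵀ with α ≥ 0, where W is a fixed p × h matrix, Ŵ(k) is p × h, L is p × p, e : Fin p → ℝ and ŝ : Fin h → ℝ. Then Tr((W - Ŵ(k+1))ᵀ(W - Ŵ(k+1))) - Tr((W - Ŵ(k))ᵀ(W - Ŵ(k))) = -2α * ŝᵀ (W - Ŵ(k))ᵀ L e + α² * ‖ŝ‖² * eᵀ Lᵀ L e. -/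
open Matrix in
theorem stmt7 (p h : ℕ) (W Wh : Matrix (Fin p) (Fin h) ℝ) (L : Matrix (Fin p) (Fin p) ℝ)
    (e : Fin p → ℝ) (sh : Fin h → ℝ) (α : ℝ) (hα : 0 ≤ α)
    (Wh' : Matrix (Fin p) (Fin h) ℝ) (hupd : Wh' = Wh + α • (L * Matrix.vecMulVec e sh)) :
    Matrix.trace ((W - Wh')ᵀ * (W - Wh')) - Matrix.trace ((W - Wh)ᵀ * (W - Wh)) =
      -2 * α * (sh ⬝ᵥ (W - Wh)ᵀ.mulVec (L.mulVec e)) +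
      α ^ 2 * (∑ j, sh j ^ 2) * (e ⬝ᵥ (Lᵀ * L).mulVec e) := by
  subst hupd
  have hL : L * Matrix.vecMulVec e sh = Matrix.vecMulVec (L.mulVec e) sh := by
    ext i j
    simp [Matrix.mul_apply, Matrix.vecMulVec_apply, Matrix.mulVec, dotProduct,
      Finset.sum_mul, mul_assoc]
  rw [hL]
  set v := L.mulVec e with hv
  have h2 : e ⬝ᵥ (Lᵀ * L).mulVec e = v ⬝ᵥ v := by
    rw [← Matrix.mulVec_mulVec, Matrix.dotProduct_mulVec, Matrix.vecMul_transpose]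
  rw [h2]
  simp only [Matrix.trace, Matrix.diag_apply, Matrix.mul_apply, Matrix.transpose_apply,
    Matrix.sub_apply, Matrix.add_apply, Matrix.smul_apply, Matrix.vecMulVec_apply,
    dotProduct, Matrix.mulVec, smul_eq_mul]
  simp only [Finset.mul_sum, Finset.sum_mul]
  conv_rhs => rw [add_comm, Finset.sum_comm]
  rw [← Finset.sum_sub_distrib, ← Finset.sum_add_distrib]
  refine Finset.sum_congr rfl fun j _ => ?_
  rw [← Finset.sum_sub_distrib, ← Finset.sum_add_distrib]
  refine Finset.sum_congr rfl fun i _ => ?_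
  ring
end

section
/- Let W be a fixed p × h matrix and define Ŵ(k+1) = Ŵ(k) + α L e(k) ŝ(k)ᵀ where e(k) = φ∘(W ŝ(k)) - φ∘(Ŵ(k) ŝ(k)) componentwise, φ is monotone increasing with derivative in (0, f_M], L is positive diagonal with eigenvalues in [L_m, L_M], and ‖ŝ(k)‖² ≤ d for all k. If α > 0 and 2 L_m / f_M - α d L_M² > 0, then V(k) = Tr((W - Ŵ(k))ᵀ(W - Ŵ(k))) is non-increasing in k. -/
open Matrix

private lemma key_pt (φ : ℝ → ℝ) (f_M : ℝ) (hφd : Differentiable ℝ φ)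
    (hφ' : ∀ x, 0 < deriv φ x ∧ deriv φ x ≤ f_M) (a b : ℝ) :
    (φ a - φ b) ^ 2 / f_M ≤ (φ a - φ b) * (a - b) := by
  have hfM : 0 < f_M := lt_of_lt_of_le (hφ' 0).1 (hφ' 0).2
  have main : ∀ x y : ℝ, x < y →
      (φ y - φ x) ^ 2 / f_M ≤ (φ y - φ x) * (y - x) := by
    intro x y hxy
    obtain ⟨c, _, hc⟩ := exists_deriv_eq_slope φ hxy hφd.continuous.continuousOn
      (hφd.differentiableOn)
    have hyx : (0:ℝ) < y - x := by linarith
    have hE : φ y - φ x = deriv φ c * (y - x) := by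
      field_simp at hc; linarith [hc]
    rw [hE, div_le_iff₀ hfM]
    have h1 := (hφ' c).1
    have h2 := (hφ' c).2
    nlinarith [sq_nonneg (y - x), mul_pos h1 (mul_pos hyx hyx)]
  rcases lt_trichotomy a b with hab | hab | hab
  · have := main a b hab
    calc (φ a - φ b) ^ 2 / f_M = (φ b - φ a) ^ 2 / f_M := by ring_nf
    _ ≤ (φ b - φ a) * (b - a) := this
    _ = (φ a - φ b) * (a - b) := by ring
  · simp [hab]
  · exact main b a hab

open Matrix in
theorem stmt8 (p h : ℕ) (W : Matrix (Fin p) (Fin h) ℝ)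
    (Wh : ℕ → Matrix (Fin p) (Fin h) ℝ) (sh : ℕ → Fin h → ℝ)
    (φ : ℝ → ℝ) (f_M : ℝ) (l : Fin p → ℝ) (L_m L_M d α : ℝ)
    (e : ℕ → Fin p → ℝ)
    (hφ : Monotone φ) (hφd : Differentiable ℝ φ)
    (hφ' : ∀ x, 0 < deriv φ x ∧ deriv φ x ≤ f_M)
    (hl : ∀ i, L_m ≤ l i ∧ l i ≤ L_M) (hLm : 0 < L_m)
    (hd : ∀ k, ∑ j, sh k j ^ 2 ≤ d)
    (he : ∀ k i, e k i = φ ((W.mulVec (sh k)) i) - φ (((Wh k).mulVec (sh k)) i))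
    (hupd : ∀ k, Wh (k + 1) = Wh k + α • (Matrix.diagonal l * Matrix.vecMulVec (e k) (sh k)))
    (hα : 0 < α) (hcond : 2 * L_m / f_M - α * d * L_M ^ 2 > 0) :
    Antitone (fun k => Matrix.trace ((W - Wh k)ᵀ * (W - Wh k))) := by
  have hfM : 0 < f_M := lt_of_lt_of_le (hφ' 0).1 (hφ' 0).2
  apply antitone_nat_of_succ_le
  intro k

  set Δ : Matrix (Fin p) (Fin h) ℝ := W - Wh k with hΔ
  set s : Fin h → ℝ := sh k with hs
  set E : Fin p → ℝ := e k with hE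
  have hW1 : W - Wh (k + 1) = Δ - α • (Matrix.diagonal l * Matrix.vecMulVec E s) := by
    rw [hupd k, sub_add_eq_sub_sub]
  -- trace as double sum
  have htr : ∀ A : Matrix (Fin p) (Fin h) ℝ,
      Matrix.trace (Aᵀ * A) = ∑ j, ∑ i, (A i j) ^ 2 := by
    intro A
    simp [Matrix.trace, Matrix.diag, Matrix.mul_apply, sq]
  rw [hW1, htr, htr]
  have hentry : ∀ i j, (Δ - α • (Matrix.diagonal l * Matrix.vecMulVec E s)) i j
      = Δ i j - α * (l i * (E i * s j)) := by
    intro i j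
    simp [Matrix.sub_apply, Matrix.smul_apply, Matrix.diagonal_mul, Matrix.vecMulVec_apply]
  simp only [hentry]
  -- expand squares
  have hexp : ∀ j, ∑ i, (Δ i j - α * (l i * (E i * s j))) ^ 2
      = ∑ i, ((Δ i j) ^ 2 - 2 * α * (l i * E i * (Δ i j * s j))
          + α ^ 2 * ((l i * E i) ^ 2 * s j ^ 2)) := by
    intro j
    apply Finset.sum_congr rfl
    intro i _
    ring
  simp only [hexp, Finset.sum_add_distrib, Finset.sum_sub_distrib]
  have key : ∑ j, ∑ i, α ^ 2 * ((l i * E i) ^ 2 * s j ^ 2)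
      ≤ ∑ j, ∑ i, 2 * α * (l i * E i * (Δ i j * s j)) := by
    -- D i = (Δ.mulVec s) i
    set D : Fin p → ℝ := Δ.mulVec s with hD
    have hDdef : ∀ i, D i = ∑ j, Δ i j * s j := fun i => rfl
    have hED : ∀ i, (E i) ^ 2 / f_M ≤ E i * D i := by
      intro i
      have h1 : D i = (W.mulVec s) i - ((Wh k).mulVec s) i := by
        rw [hD, hΔ, Matrix.sub_mulVec]; rfl
      rw [h1, hE, he k i]
      exact key_pt φ f_M hφd hφ' _ _
    have hS : (0:ℝ) ≤ ∑ i, (E i) ^ 2 :=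
      Finset.sum_nonneg fun i _ => sq_nonneg _
    have hsd : (0:ℝ) ≤ d := le_trans (Finset.sum_nonneg fun j _ => sq_nonneg _) (hd k)
    -- RHS rewrite
    have hrhs : ∑ j, ∑ i, 2 * α * (l i * E i * (Δ i j * s j))
        = 2 * α * ∑ i, l i * E i * D i := by
      rw [Finset.sum_comm]
      rw [Finset.mul_sum]
      apply Finset.sum_congr rfl
      intro i _
      rw [hDdef, Finset.mul_sum, Finset.mul_sum]
    have hlhs : ∑ j, ∑ i, α ^ 2 * ((l i * E i) ^ 2 * s j ^ 2)
        = α ^ 2 * ((∑ i, (l i * E i) ^ 2) * ∑ j, s j ^ 2) := by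
      rw [Finset.sum_comm, Finset.sum_mul_sum, Finset.mul_sum]
      exact Finset.sum_congr rfl fun i _ => by rw [Finset.mul_sum]
    rw [hrhs, hlhs]
    -- bounds
    have hb1 : (∑ i, (l i * E i) ^ 2) * ∑ j, s j ^ 2
        ≤ (L_M ^ 2 * ∑ i, (E i) ^ 2) * d := by
      apply mul_le_mul
      · rw [Finset.mul_sum]
        apply Finset.sum_le_sum
        intro i _
        have h1 := (hl i).1
        have h2 := (hl i).2
        nlinarith [sq_nonneg (E i), mul_nonneg (mul_nonneg (sub_nonneg.2 h2)
          (by linarith : (0:ℝ) ≤ L_M + l i)) (sq_nonneg (E i))]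
      · exact hd k
      · exact Finset.sum_nonneg fun j _ => sq_nonneg _
      · positivity
    have hb2 : L_m / f_M * ∑ i, (E i) ^ 2 ≤ ∑ i, l i * E i * D i := by
      rw [Finset.mul_sum]
      apply Finset.sum_le_sum
      intro i _
      have hEDi := hED i
      have h1 := (hl i).1
      have hEDnn : 0 ≤ E i * D i := le_trans (by positivity) hEDi
      have : L_m / f_M * E i ^ 2 ≤ L_m * (E i * D i) := by
        rw [div_mul_eq_mul_div, mul_div_assoc]
        exact mul_le_mul_of_nonneg_left hEDi (le_of_lt hLm)
      calc L_m / f_M * E i ^ 2 ≤ L_m * (E i * D i) := this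
        _ ≤ l i * (E i * D i) := mul_le_mul_of_nonneg_right h1 hEDnn
        _ = l i * E i * D i := by ring
    calc α ^ 2 * ((∑ i, (l i * E i) ^ 2) * ∑ j, s j ^ 2)
        ≤ α ^ 2 * ((L_M ^ 2 * ∑ i, (E i) ^ 2) * d) := by
          apply mul_le_mul_of_nonneg_left hb1 (by positivity)
      _ ≤ 2 * α * (L_m / f_M * ∑ i, (E i) ^ 2) := by
          have hc : α * (L_M ^ 2 * d) ≤ 2 * (L_m / f_M) := by
            have h2 : α * (L_M ^ 2 * d) = α * d * L_M ^ 2 := by ring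
            have h3 : 2 * (L_m / f_M) = 2 * L_m / f_M := by ring
            rw [h2, h3]; linarith
          nlinarith [mul_le_mul_of_nonneg_right hc hS]
      _ ≤ 2 * α * ∑ i, l i * E i * D i := by
          apply mul_le_mul_of_nonneg_left hb2 (by positivity)
  linarith [key]
end

section
/- Let δ = ΔW ŝ where ΔW = W - Ŵ is a p × h matrix and ŝ : Fin h → ℝ, and let e : Fin p → ℝ satisfy e i * δ i ≥ 0 and |e i| ≤ f_M |δ i| for all i, with f_M > 0. Let L be positive diagonal with minimum eigenvalue L_m and maximum eigenvalue L_M, and suppose ‖ŝ‖² ≤ d. If the update is Ŵ' = Ŵ + α L e ŝᵀ, then Tr((W - Ŵ')ᵀ(W - Ŵ')) ≤ Tr((W - Ŵ)ᵀ(W - Ŵ)) - α(2L_m/f_M - α d L_M²) ‖e‖². -/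
open Matrix in
theorem stmt11 (p h : ℕ) (W Wh : Matrix (Fin p) (Fin h) ℝ) (sh : Fin h → ℝ)
    (e δ : Fin p → ℝ) (f_M L_m L_M d α : ℝ) (l : Fin p → ℝ)
    (hδ : δ = (W - Wh).mulVec sh) (hf : 0 < f_M)
    (hsign : ∀ i, e i * δ i ≥ 0) (hmag : ∀ i, |e i| ≤ f_M * |δ i|)
    (hl : ∀ i, L_m ≤ l i ∧ l i ≤ L_M) (hLm : 0 < L_m)
    (hd : ∑ j, sh j ^ 2 ≤ d) (hα : 0 ≤ α)
    (Wh' : Matrix (Fin p) (Fin h) ℝ)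
    (hupd : Wh' = Wh + α • (Matrix.diagonal l * Matrix.vecMulVec e sh)) :
    Matrix.trace ((W - Wh')ᵀ * (W - Wh')) ≤
      Matrix.trace ((W - Wh)ᵀ * (W - Wh)) -
        α * (2 * L_m / f_M - α * d * L_M ^ 2) * ∑ i, e i ^ 2 := by
  set A := W - Wh with hA
  have trace_formula : ∀ (M : Matrix (Fin p) (Fin h) ℝ),
      Matrix.trace (Mᵀ * M) = ∑ i, ∑ j, M i j ^ 2 := by
    intro M
    simp only [Matrix.trace, Matrix.diag, Matrix.mul_apply, Matrix.transpose_apply, sq]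
    rw [Finset.sum_comm]
  have entry : ∀ i j, (W - Wh') i j = A i j - α * (l i * e i * sh j) := by
    intro i j
    subst hupd
    simp [Matrix.sub_apply, Matrix.add_apply, Matrix.smul_apply, Matrix.mul_apply,
      Matrix.diagonal, Matrix.vecMulVec_apply, Finset.sum_ite_eq, hA]
    ring
  have hδi : ∀ i, δ i = ∑ j, A i j * sh j := by
    intro i; rw [hδ]; simp [Matrix.mulVec, dotProduct]
  have row : ∀ i, ∑ j, (A i j - α * (l i * e i * sh j)) ^ 2 =
      (∑ j, A i j ^ 2) - 2 * α * (l i * (e i * δ i)) +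
        α ^ 2 * ((l i * e i) ^ 2 * ∑ j, sh j ^ 2) := by
    intro i
    rw [hδi i]
    have h1 : ∀ j, (A i j - α * (l i * e i * sh j)) ^ 2 =
        A i j ^ 2 - 2 * α * (l i * (e i * (A i j * sh j))) +
          α ^ 2 * ((l i * e i) ^ 2 * sh j ^ 2) := by
      intro j; ring
    simp_rw [h1, Finset.sum_add_distrib, Finset.sum_sub_distrib, ← Finset.mul_sum]
  have expand : Matrix.trace ((W - Wh')ᵀ * (W - Wh')) =
      Matrix.trace (Aᵀ * A) - 2 * α * (∑ i, l i * (e i * δ i)) +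
        α ^ 2 * (∑ i, (l i * e i) ^ 2) * (∑ j, sh j ^ 2) := by
    rw [trace_formula, trace_formula]
    simp_rw [entry, row]
    rw [Finset.sum_add_distrib, Finset.sum_sub_distrib, ← Finset.mul_sum,
      ← Finset.mul_sum, ← Finset.sum_mul]
    ring
  rw [expand]
  -- per-term bounds
  have hE : (0:ℝ) ≤ ∑ i, e i ^ 2 := Finset.sum_nonneg fun i _ => sq_nonneg _
  have hSsh : (0:ℝ) ≤ ∑ j, sh j ^ 2 := Finset.sum_nonneg fun j _ => sq_nonneg _
  have hS1 : L_m / f_M * ∑ i, e i ^ 2 ≤ ∑ i, l i * (e i * δ i) := by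
    rw [Finset.mul_sum]
    apply Finset.sum_le_sum
    intro i _
    have hs := hsign i
    have hm := hmag i
    have h1 : e i ^ 2 ≤ f_M * (e i * δ i) := by
      have habs : |e i * δ i| = e i * δ i := abs_of_nonneg hs
      have h2 : |e i| * |e i| ≤ (f_M * |δ i|) * |e i| :=
        mul_le_mul_of_nonneg_right hm (abs_nonneg _)
      calc e i ^ 2 = |e i| * |e i| := by rw [← sq_abs (e i)]; ring
        _ ≤ (f_M * |δ i|) * |e i| := h2
        _ = f_M * |e i * δ i| := by rw [abs_mul]; ring
        _ = f_M * (e i * δ i) := by rw [habs]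
    have hli := hl i
    rw [div_mul_eq_mul_div, div_le_iff₀ hf]
    nlinarith [mul_le_mul_of_nonneg_left h1 hLm.le, mul_le_mul_of_nonneg_right hli.1 hs]
  have hS2 : (∑ i, (l i * e i) ^ 2) ≤ L_M ^ 2 * ∑ i, e i ^ 2 := by
    rw [Finset.mul_sum]
    apply Finset.sum_le_sum
    intro i _
    have hli := hl i
    nlinarith [sq_nonneg (e i), mul_le_mul hli.2 hli.2 (hLm.le.trans hli.1) (hLm.le.trans (hli.1.trans hli.2))]
  have hS2' : (0:ℝ) ≤ ∑ i, (l i * e i) ^ 2 := Finset.sum_nonneg fun i _ => sq_nonneg _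
  have hd0 : (0:ℝ) ≤ d := le_trans hSsh hd
  have h3 : (∑ i, (l i * e i) ^ 2) * (∑ j, sh j ^ 2) ≤ L_M ^ 2 * (∑ i, e i ^ 2) * d := by
    calc (∑ i, (l i * e i) ^ 2) * (∑ j, sh j ^ 2) ≤ (∑ i, (l i * e i) ^ 2) * d :=
          mul_le_mul_of_nonneg_left hd hS2'
      _ ≤ L_M ^ 2 * (∑ i, e i ^ 2) * d := mul_le_mul_of_nonneg_right hS2 hd0
  have hα2 : (0:ℝ) ≤ α ^ 2 := sq_nonneg _
  have h4 := mul_le_mul_of_nonneg_left hS1 hα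
  have h5 := mul_le_mul_of_nonneg_left h3 hα2
  have hexp : α * (2 * L_m / f_M - α * d * L_M ^ 2) * ∑ i, e i ^ 2 =
      2 * (α * (L_m / f_M * ∑ i, e i ^ 2)) - α ^ 2 * (L_M ^ 2 * (∑ i, e i ^ 2) * d) := by
    ring
  rw [hexp]
  have h6 : α ^ 2 * ((∑ i, (l i * e i) ^ 2) * ∑ j, sh j ^ 2) =
      (α ^ 2 * ∑ i, (l i * e i) ^ 2) * ∑ j, sh j ^ 2 := by ring
  linarith [h6 ▸ h5]
end
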